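/- L² energy bound for the u-component: let T > 0, let u : [0, T] → L²(Ω) be a continuously differentiable curve and v : [0, T] → L²(Ω) an arbitrary curve, and suppose that for every t ∈ [0, T]: (u′(t), u(t)) + d_u B[u(t), u(t)] = (−σ(u(t))σ(v(t))² + f(1 − u(t)), u(t)), where compositions with σ are pointwise. Then ‖u(t)‖² ≤ ‖u(0)‖² + 2L for all t ∈ [0, T]. -/

import Mathlib

/-!
Testing the equation with `u(t)` gives `½ d/dt ‖u‖² = (u', u) ≤ (reaction, u)`, since `B[u, u] ≥ 0`.
Because `σ(u) u ≥ 0`, the reaction is bounded pointwise by `f (1 - u) u ≤ f/2 (1 - u²)`, so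
`E = ‖u‖²` satisfies `E' ≤ f (2L - E)`. Hence `E` can never rise above `max (E 0) (2L)`.
-/

open MeasureTheory Set Real

/-- Lebesgue measure restricted to `Ω = [−L, L]`. -/
noncomputable def muOmega (L : ℝ) : Measure ℝ := volume.restrict (Icc (-L) L)

theorem le_max_of_deriv_right_le_mul_sub {E E' : ℝ → ℝ} {a b k c : ℝ} (hk : 0 < k)
    (hE : ContinuousOn E (Icc a b)) (hE' : ∀ x ∈ Ico a b, HasDerivWithinAt E (E' x) (Ici x) x)
    (bound : ∀ x ∈ Ico a b, E' x ≤ k * (c - E x)) :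
    ∀ ⦃x⦄, x ∈ Icc a b → E x ≤ max (E a) c := by
  intro x hx
  refine le_of_forall_pos_le_add fun ε hε => ?_
  refine image_le_of_deriv_right_lt_deriv_boundary hE hE' (B' := 0)
    (by linarith [le_max_left (E a) c]) (fun _ => hasDerivAt_const _ _)
    (fun y hy hEy => ?_) hx
  calc E' y ≤ k * (c - E y) := bound y hy
    _ ≤ k * -ε := by gcongr; rw [hEy]; linarith [le_max_right (E a) c]
    _ < 0 := mul_neg_of_pos_of_neg hk (neg_neg_of_pos hε)

theorem reaction_mul_le_of_mul_nonneg {σ : ℝ → ℝ} {a b f : ℝ} (hσa : 0 ≤ σ a * a) (hf : 0 ≤ f) :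
    (-σ a * σ b ^ 2 + f * (1 - a)) * a ≤ f / 2 * (1 - a * a) := by
  nlinarith [mul_nonneg hσa (sq_nonneg (σ b)), mul_nonneg hf (sq_nonneg (1 - a))]

namespace MeasureTheory.L2

variable {α : Type*} [MeasurableSpace α] {μ : Measure α}

theorem integral_mul_eq_inner (w z : Lp ℝ 2 μ) : ∫ x, w x * z x ∂μ = inner ℝ w z := by
  simp only [inner_def, Real.inner_apply]

theorem integrable_mul_self (w : Lp ℝ 2 μ) : Integrable (fun x => w x * w x) μ := by
  simpa only [Real.inner_apply] using integrable_inner (𝕜 := ℝ) w w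

theorem integral_one_sub_mul_self [IsFiniteMeasure μ] (w : Lp ℝ 2 μ) :
    ∫ x, (1 - w x * w x) ∂μ = μ.real univ - ‖w‖ ^ 2 := by
  rw [integral_sub (integrable_const 1) (integrable_mul_self w), integral_const, smul_eq_mul,
    mul_one, integral_mul_eq_inner, real_inner_self_eq_norm_sq]

variable [IsFiniteMeasure μ] {σ : ℝ → ℝ} {C : ℝ}

theorem integrable_reaction_mul (hσ : Continuous σ) (hσC : ∀ z, |σ z| ≤ C) (f : ℝ)
    (w z : Lp ℝ 2 μ) :
    Integrable (fun x => (-σ (w x) * σ (z x) ^ 2 + f * (1 - w x)) * w x) μ := by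
  have hw : Integrable (fun x => w x) μ := (Lp.memLp w).integrable one_le_two
  have hσw := hσ.comp_aestronglyMeasurable (Lp.aestronglyMeasurable w)
  have hσz := hσ.comp_aestronglyMeasurable (Lp.aestronglyMeasurable z)
  -- after splitting off `-f w²`, what remains is a bounded multiple of `w ∈ L¹`
  have hbdd : Integrable (fun x => (-σ (w x) * σ (z x) ^ 2 + f) * w x) μ := by
    refine hw.bdd_mul (c := C * C ^ 2 + |f|)
      ((hσw.neg.mul (hσz.pow 2)).add aestronglyMeasurable_const) (ae_of_all _ fun x => ?_)
    have hσz2 : σ (z x) ^ 2 ≤ C ^ 2 := sq_le_sq' (abs_le.mp (hσC _)).1 (abs_le.mp (hσC _)).2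
    have hC : 0 ≤ C := (abs_nonneg _).trans (hσC 0)
    calc ‖-σ (w x) * σ (z x) ^ 2 + f‖ ≤ |-σ (w x) * σ (z x) ^ 2| + |f| := abs_add_le _ _
      _ = |σ (w x)| * σ (z x) ^ 2 + |f| := by rw [abs_mul, abs_neg, abs_sq]
      _ ≤ C * C ^ 2 + |f| := by gcongr; exact hσC _
  refine (hbdd.sub ((integrable_mul_self w).const_mul f)).congr (ae_of_all _ fun x => ?_)
  simp only [Pi.sub_apply]
  ring

theorem two_mul_inner_le_of_tested_reaction_eq (hσ : Continuous σ) (hσC : ∀ z, |σ z| ≤ C)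
    (hσsign : ∀ z, 0 ≤ σ z * z) {f b : ℝ} (hf : 0 ≤ f) (hb : 0 ≤ b) {w w' z : Lp ℝ 2 μ}
    (heq : ∫ x, w' x * w x ∂μ + b = ∫ x, (-σ (w x) * σ (z x) ^ 2 + f * (1 - w x)) * w x ∂μ) :
    2 * inner ℝ w w' ≤ f * (μ.real univ - ‖w‖ ^ 2) := by
  have hreact : ∫ x, (-σ (w x) * σ (z x) ^ 2 + f * (1 - w x)) * w x ∂μ
      ≤ f / 2 * (μ.real univ - ‖w‖ ^ 2) := by
    rw [← integral_one_sub_mul_self, ← integral_const_mul]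
    exact integral_mono (integrable_reaction_mul hσ hσC f w z)
      (((integrable_const 1).sub (integrable_mul_self w)).const_mul _)
      fun x => reaction_mul_le_of_mul_nonneg (hσsign _) hf
  rw [integral_mul_eq_inner, real_inner_comm] at heq
  linarith

end MeasureTheory.L2

instance (L : ℝ) : IsFiniteMeasure (muOmega L) := by
  rw [muOmega]; infer_instance

theorem muOmega_real_univ {L : ℝ} (hL : 0 ≤ L) : (muOmega L).real univ = 2 * L := by
  rw [muOmega, measureReal_restrict_apply_univ, Real.volume_real_Icc_of_le (by linarith)]
  ring

theorem u_energy_bound_general (L : ℝ) (hL : 0 < L) (M : ℝ)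
    (σ : ℝ → ℝ) (hσ : ContDiff ℝ 1 σ)
    (hσb : ∀ z, |σ z| ≤ 2 * M) (hσsign : ∀ z, 0 ≤ σ z * z)
    (B : Lp ℝ 2 (muOmega L) →ₗ[ℝ] Lp ℝ 2 (muOmega L) →ₗ[ℝ] ℝ)
    (hBpos : ∀ w, 0 ≤ B w w)
    (du f : ℝ) (hdu : 0 ≤ du) (hf : 0 < f)
    (T : ℝ)
    (u u' v : ℝ → Lp ℝ 2 (muOmega L))
    (hud : ∀ t ∈ Icc (0:ℝ) T, HasDerivWithinAt u (u' t) (Icc 0 T) t)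
    (heq : ∀ t ∈ Icc (0:ℝ) T,
      (∫ x, (u' t) x * (u t) x ∂muOmega L) + du * B (u t) (u t) =
        ∫ x, (-(σ ((u t) x)) * (σ ((v t) x)) ^ 2 + f * (1 - (u t) x)) * (u t) x
          ∂muOmega L) :
    ∀ t ∈ Icc (0:ℝ) T, ‖u t‖ ^ 2 ≤ ‖u 0‖ ^ 2 + 2 * L := by
  have hE : ∀ t ∈ Icc (0:ℝ) T,
      HasDerivWithinAt (‖u ·‖ ^ 2) (2 * inner ℝ (u t) (u' t)) (Icc 0 T) t :=
    fun t ht => (hud t ht).norm_sq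
  have hdissip : ∀ t ∈ Icc (0:ℝ) T, 2 * inner ℝ (u t) (u' t) ≤ f * (2 * L - ‖u t‖ ^ 2) := by
    intro t ht
    rw [← muOmega_real_univ hL.le]
    exact L2.two_mul_inner_le_of_tested_reaction_eq hσ.continuous hσb hσsign hf.le
      (mul_nonneg hdu (hBpos _)) (heq t ht)
  intro t ht
  calc ‖u t‖ ^ 2 ≤ max (‖u 0‖ ^ 2) (2 * L) :=
        le_max_of_deriv_right_le_mul_sub hf (fun s hs => (hE s hs).continuousWithinAt)
          (fun s hs => (hE s (Ico_subset_Icc_self hs)).mono_of_mem_nhdsWithin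
            (Icc_mem_nhdsGE_of_mem hs))
          (fun s hs => hdissip s (Ico_subset_Icc_self hs)) ht
    _ ≤ ‖u 0‖ ^ 2 + 2 * L := max_le (le_add_of_nonneg_right (by positivity))
      (le_add_of_nonneg_left (by positivity))

/-- L² energy bound for the `u`-component of the truncated nonlocal Gray–Scott system:
under the tested-by-`u(t)` weak equation, `‖u(t)‖² ≤ ‖u(0)‖² + 2L` on `[0, T]`. -/
theorem u_energy_bound (L : ℝ) (hL : 0 < L) (M : ℝ) (hM : 0 < M)
    (σ : ℝ → ℝ) (hσ : ContDiff ℝ 1 σ)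
    (hσ'0 : ∀ z, 0 ≤ deriv σ z) (hσ'1 : ∀ z, deriv σ z ≤ 1)
    (hσb : ∀ z, |σ z| ≤ 2 * M) (hσsign : ∀ z, 0 ≤ σ z * z)
    (B : Lp ℝ 2 (muOmega L) →ₗ[ℝ] Lp ℝ 2 (muOmega L) →ₗ[ℝ] ℝ)
    (hBpos : ∀ w, 0 ≤ B w w) (hBbdd : ∀ w ψ, |B w ψ| ≤ ‖w‖ * ‖ψ‖)
    (du dv f κ : ℝ) (hdu : 0 ≤ du) (hdv : 0 ≤ dv) (hf : 0 < f) (hκ : 0 < κ)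
    (T : ℝ) (hT : 0 < T)
    (u u' v : ℝ → Lp ℝ 2 (muOmega L))
    (hu'cont : ContinuousOn u' (Icc 0 T))
    (hud : ∀ t ∈ Icc (0:ℝ) T, HasDerivWithinAt u (u' t) (Icc 0 T) t)
    (heq : ∀ t ∈ Icc (0:ℝ) T,
      (∫ x, (u' t) x * (u t) x ∂muOmega L) + du * B (u t) (u t) =
        ∫ x, (-(σ ((u t) x)) * (σ ((v t) x)) ^ 2 + f * (1 - (u t) x)) * (u t) x
          ∂muOmega L) :
    ∀ t ∈ Icc (0:ℝ) T, ‖u t‖ ^ 2 ≤ ‖u 0‖ ^ 2 + 2 * L :=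
  u_energy_bound_general L hL M σ hσ hσb hσsign B hBpos du f hdu hf T u u' v hud heq
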